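/- arXiv:1607.01903 — 4 statements merged into one kernel-verified Lean document; each statement's English description precedes it below -/
import Mathlib

section
/- Let G be a multigraph, k a positive integer, and let A, B be nonempty subsets of two distinct equivalence classes of the relation ∼ₖ. Then there is a set X of at most k−1 edges of G such that in G−X there is no path from any vertex of A to any vertex of B. -/
/-- A multigraph: an edge type `E` together with an assignment of an
unordered pair of (not necessarily distinct) endvertices to every edge.
Loops and parallel edges are allowed. -/
structure Multigraph (V E : Type) where
  ends : E → Sym2 V

namespace Multigraph

variable {V E : Type}

/-- Walks in a multigraph, recording the edges traversed. -/
inductive Walk (G : Multigraph V E) : V → V → Type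
  | nil (v : V) : Walk G v v
  | cons {u v w : V} (e : E) (h : G.ends e = s(u, v)) (p : Walk G v w) : Walk G u w

namespace Walk

variable {G : Multigraph V E}

/-- The list of vertices visited by a walk. -/
def support : {u v : V} → G.Walk u v → List V
  | u, _, .nil _ => [u]
  | u, _, .cons _ _ p => u :: support p

/-- The list of edges traversed by a walk. -/
def edges : {u v : V} → G.Walk u v → List E
  | _, _, .nil _ => []
  | _, _, .cons e _ p => e :: edges p

/-- The length (number of edges) of a walk. -/
def length : {u v : V} → G.Walk u v → ℕ
  | _, _, .nil _ => 0
  | _, _, .cons _ _ p => length p + 1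

/-- A walk is a path if it repeats no vertex. -/
def IsPath {u v : V} (p : G.Walk u v) : Prop := p.support.Nodup

/-- A closed walk is a cycle if it is nonempty, repeats no edge and repeats no
vertex except the base vertex.  Cycles of length `1` (loops) and of
length `2` (pairs of parallel edges) are allowed. -/
def IsCycle {u : V} (p : G.Walk u u) : Prop :=
  p.edges ≠ [] ∧ p.edges.Nodup ∧ p.support.tail.Nodup

end Walk

open scoped Classical in
/-- The degree of a vertex in a multigraph: loops count twice. -/
noncomputable def degree (G : Multigraph V E) [Fintype E] (v : V) : ℕ :=
  ∑ e : E, (if G.ends e = s(v, v) then 2 else if v ∈ G.ends e then 1 else 0)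

end Multigraph

namespace Multigraph

variable {V E : Type}

/-- There exist `k` pairwise edge-disjoint `u`–`v`-paths in `G`. -/
def EdgeDisjointPaths (G : Multigraph V E) (k : ℕ) (u v : V) : Prop :=
  ∃ P : Fin k → G.Walk u v,
    (∀ i, (P i).IsPath) ∧
    ∀ i j, i ≠ j → ∀ e ∈ (P i).edges, e ∉ (P j).edges

/-- The relation `u ∼ₖ v`: either `u = v` or there are `k` pairwise
edge-disjoint `u`–`v`-paths in `G`. -/
def SimK (G : Multigraph V E) (k : ℕ) (u v : V) : Prop :=
  u = v ∨ G.EdgeDisjointPaths k u v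

end Multigraph


/-!
Pick `a ∈ A` and `b ∈ B`. Since `a` and `b` are not joined by `k` edge-disjoint paths, the edge
version of Menger's theorem gives a set `X` of fewer than `k` edges meeting every `a`–`b` walk.
Menger's theorem is proved with unit flows, augmented along residual paths as long as possible:
a flow of value `k` cancels path by path into `k` edge-disjoint paths, and when no augmenting
path exists, the flow edges leaving the set of vertices reached in the residual graph number
exactly the value of the flow and separate.

Every `a' ∈ A` is joined to `a` by `k` edge-disjoint paths, one of which misses `X`, and
likewise every `b' ∈ B` to `b`. So a walk from `a'` to `b'` missing `X` would extend to a walk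
from `a` to `b` missing `X`.
-/
namespace Multigraph

open Finset

section Walks

variable {V E : Type} {G : Multigraph V E}

namespace Walk

def steps : {u v : V} → G.Walk u v → List (V × E × V)
  | _, _, .nil _ => []
  | u, _, @cons _ _ _ _ v _ e _ p => (u, e, v) :: p.steps

def append : {u v w : V} → G.Walk u v → G.Walk v w → G.Walk u w
  | _, _, _, .nil _, q => q
  | _, _, _, .cons e h p, q => .cons e h (p.append q)

lemma edges_append {u v w : V} (p : G.Walk u v) (q : G.Walk v w) :
    (p.append q).edges = p.edges ++ q.edges := by
  induction p with
  | nil => rfl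
  | cons e h p ih => simp [append, edges, ih]

lemma edges_eq_map_steps {u v : V} (p : G.Walk u v) : p.edges = p.steps.map (·.2.1) := by
  induction p with
  | nil => rfl
  | cons e h p ih => simp [edges, steps, ih]

lemma start_mem_support {u v : V} (p : G.Walk u v) : u ∈ p.support := by
  cases p <;> simp [support]

lemma mem_support_of_mem_steps {u v x y : V} {e : E} {p : G.Walk u v}
    (h : (x, e, y) ∈ p.steps) : G.ends e = s(x, y) ∧ x ∈ p.support ∧ y ∈ p.support := by
  induction p with
  | nil => simp [steps] at h
  | cons e' h' p ih =>
    simp only [steps, List.mem_cons, Prod.mk.injEq] at h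
    rcases h with ⟨rfl, rfl, rfl⟩ | h
    · exact ⟨h', by simp [support], by simp [support, start_mem_support]⟩
    · obtain ⟨hends, hx, hy⟩ := ih h
      exact ⟨hends, by simp [support, hx], by simp [support, hy]⟩

lemma exists_suffix {u v x : V} (p : G.Walk u v) (hx : x ∈ p.support) :
    ∃ q : G.Walk x v, q.support.Sublist p.support ∧ q.steps ⊆ p.steps := by
  induction p with
  | nil =>
    obtain rfl := List.mem_singleton.1 hx
    exact ⟨.nil _, List.Sublist.refl _, List.Subset.refl _⟩
  | @cons u w v e h p ih =>
    by_cases hxu : x = u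
    · subst hxu
      exact ⟨.cons e h p, List.Sublist.refl _, List.Subset.refl _⟩
    · obtain ⟨q, hsub, hsteps⟩ := ih (by simpa [support, hxu] using hx)
      exact ⟨q, hsub.cons _, List.Subset.trans hsteps (List.subset_cons_self _ _)⟩

lemma exists_isPath {u v : V} (p : G.Walk u v) :
    ∃ q : G.Walk u v, q.IsPath ∧ q.steps ⊆ p.steps := by
  induction p with
  | nil => exact ⟨.nil _, List.nodup_singleton _, List.Subset.refl _⟩
  | @cons u w v e h p ih =>
    obtain ⟨q, hq, hsteps⟩ := ih
    by_cases hu : u ∈ q.support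
    · obtain ⟨r, hsub, hr⟩ := q.exists_suffix hu
      exact ⟨r, hq.sublist hsub,
        List.Subset.trans hr (List.Subset.trans hsteps (List.subset_cons_self _ _))⟩
    · exact ⟨.cons e h q, List.nodup_cons.2 ⟨hu, hq⟩, List.cons_subset_cons _ hsteps⟩

lemma IsPath.edges_nodup {u v : V} {p : G.Walk u v} (hp : p.IsPath) : p.edges.Nodup := by
  induction p with
  | nil => simp [edges]
  | @cons u w v e h p ih =>
    rw [IsPath, support, List.nodup_cons] at hp
    refine List.nodup_cons.2 ⟨fun he => hp.1 ?_, ih hp.2⟩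
    obtain ⟨⟨x, e', y⟩, hxy, rfl⟩ := List.mem_map.1 (p.edges_eq_map_steps ▸ he)
    obtain ⟨hends, hx, hy⟩ := mem_support_of_mem_steps hxy
    rcases Sym2.mem_iff.1 (hends ▸ h ▸ Sym2.mem_mk_left u w : u ∈ s(x, y)) with rfl | rfl
    exacts [hx, hy]

lemma exists_mem_edges_of_crossing {R : Set V} {X : Finset E}
    (hX : ∀ e x y, G.ends e = s(x, y) → x ∉ R → y ∈ R → e ∈ X)
    {u v : V} (p : G.Walk u v) (hu : u ∉ R) (hv : v ∈ R) : ∃ e ∈ p.edges, e ∈ X := by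
  induction p with
  | nil => exact absurd hv hu
  | @cons u w v e h p ih =>
    by_cases hw : w ∈ R
    · exact ⟨e, List.mem_cons_self .., hX e u w h hu hw⟩
    · obtain ⟨e', he', heX⟩ := ih hw hv
      exact ⟨e', List.mem_cons_of_mem _ he', heX⟩

end Walk

lemma exists_isPath_of_reflTransGen {S : V → E → V → Prop}
    (hS : ∀ x e y, S x e y → G.ends e = s(x, y)) {u v : V}
    (h : Relation.ReflTransGen (fun x y => ∃ e, S x e y) u v) :
    ∃ p : G.Walk u v, p.IsPath ∧ ∀ x e y, (x, e, y) ∈ p.steps → S x e y := by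
  suffices ∃ p : G.Walk u v, ∀ x e y, (x, e, y) ∈ p.steps → S x e y by
    obtain ⟨p, hp⟩ := this
    obtain ⟨q, hq, hsteps⟩ := p.exists_isPath
    exact ⟨q, hq, fun x e y hxy => hp x e y (hsteps hxy)⟩
  induction h using Relation.ReflTransGen.head_induction_on with
  | refl => exact ⟨.nil _, by simp [Walk.steps]⟩
  | @head x w hxw _ ih =>
    obtain ⟨e, he⟩ := hxw
    obtain ⟨p, hp⟩ := ih
    refine ⟨.cons e (hS x e w he) p, fun x' e' y' h' => ?_⟩
    simp only [Walk.steps, List.mem_cons, Prod.mk.injEq] at h'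
    rcases h' with ⟨rfl, rfl, rfl⟩ | h'
    exacts [he, hp x' e' y' h']

def Separates (G : Multigraph V E) (X : Finset E) (u v : V) : Prop :=
  ∀ p : G.Walk u v, ∃ e ∈ p.edges, e ∈ X

lemma EdgeDisjointPaths.exists_walk_avoiding {k : ℕ} {u v : V} {X : Finset E}
    (h : G.EdgeDisjointPaths k u v) (hX : #X < k) :
    ∃ p : G.Walk u v, ∀ e ∈ p.edges, e ∉ X := by
  obtain ⟨P, -, hdisj⟩ := h
  by_contra! hP
  choose g hgP hgX using fun i => hP (P i)
  have hg : Function.Injective g := fun i j hij =>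
    by_contra fun hne => hdisj i j hne (g i) (hgP i) (hij ▸ hgP j)
  have := card_le_card_of_injOn (s := univ) g (fun i _ => hgX i) hg.injOn
  simp only [card_univ, Fintype.card_fin] at this
  omega

lemma SimK.exists_walk_avoiding {k : ℕ} {u v : V} {X : Finset E} (h : G.SimK k u v)
    (hX : #X < k) : ∃ p : G.Walk u v, ∀ e ∈ p.edges, e ∉ X := by
  rcases h with rfl | h
  exacts [⟨.nil u, by simp [Walk.edges]⟩, h.exists_walk_avoiding hX]

end Walks

/-! A partial orientation `f : E → Option (V × V)` is an integral flow of capacity one per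
edge: `f e = some (x, y)` sends one unit along `e` from `x` to `y`, and `f e = none` leaves `e`
unused. -/

section Augment

variable {V E : Type} {G : Multigraph V E} {f : E → Option (V × V)}

def Orients (G : Multigraph V E) (f : E → Option (V × V)) : Prop :=
  ∀ e x y, f e = some (x, y) → G.ends e = s(x, y)

def ResidualStep (G : Multigraph V E) (f : E → Option (V × V)) (u : V) (e : E) (v : V) :
    Prop :=
  (f e = none ∧ G.ends e = s(u, v)) ∨ f e = some (v, u)

lemma ResidualStep.ends (hf : G.Orients f) {u v : V} {e : E} (h : G.ResidualStep f u e v) :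
    G.ends e = s(u, v) := by
  rcases h with ⟨-, h⟩ | h
  exacts [h, (hf e v u h).trans Sym2.eq_swap]

def toggle (u v : V) : Option (V × V) → Option (V × V)
  | none => some (u, v)
  | some _ => none

variable [DecidableEq E]

def augment (f : E → Option (V × V)) : {u w : V} → G.Walk u w → E → Option (V × V)
  | _, _, .nil _ => f
  | u, _, @Walk.cons _ _ _ _ v _ e _ p => Function.update (augment f p) e (toggle u v (f e))

lemma augment_of_not_mem {u w : V} (p : G.Walk u w) {e : E} (he : e ∉ p.edges) :
    augment f p e = f e := by
  induction p with
  | nil => rfl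
  | cons e' h p ih =>
    simp only [Walk.edges, List.mem_cons, not_or] at he
    simp only [augment, Function.update_of_ne he.1, ih he.2]

lemma augment_eq_none {u w : V} (p : G.Walk u w) {e : E} (he : e ∈ p.edges)
    (hfe : f e ≠ none) : augment f p e = none := by
  induction p with
  | nil => simp [Walk.edges] at he
  | cons e' h p ih =>
    by_cases hee : e = e'
    · subst hee
      obtain ⟨d, hd⟩ := Option.ne_none_iff_exists'.1 hfe
      simp [augment, hd, toggle]
    · simp only [Walk.edges, List.mem_cons, hee, false_or] at he
      simp only [augment, Function.update_of_ne hee, ih he]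

lemma orients_augment (hf : G.Orients f) {u w : V} (p : G.Walk u w)
    (hp : ∀ x e y, (x, e, y) ∈ p.steps → G.ResidualStep f x e y) :
    G.Orients (augment f p) := by
  induction p with
  | nil => exact hf
  | @cons u v w e h p ih =>
    simp only [Walk.steps, List.mem_cons, Prod.mk.injEq] at hp
    intro e' x y hxy
    by_cases hee : e' = e
    · subst hee
      rcases hp u e' v (Or.inl ⟨rfl, rfl, rfl⟩) with ⟨hnone, -⟩ | hsome
      · simp only [augment, Function.update_self, hnone, toggle, Option.some.injEq,
          Prod.mk.injEq] at hxy
        obtain ⟨rfl, rfl⟩ := hxy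
        exact h
      · simp [augment, hsome, toggle] at hxy
    · rw [augment, Function.update_of_ne hee] at hxy
      exact ih (fun x e y hs => hp x e y (Or.inr hs)) e' x y hxy

end Augment

section NetOut

variable {V : Type} [DecidableEq V]

def netOut : Option (V × V) → V → ℤ
  | none => 0
  | some (x, y) => Pi.single x 1 - Pi.single y 1

lemma netOut_some_swap (x y : V) : netOut (some (y, x)) = -netOut (some (x, y)) := by
  simp [netOut]

lemma sum_netOut_some (S : Finset V) (x y : V) :
    ∑ v ∈ S, netOut (some (x, y)) v =
      (if x ∈ S then 1 else 0) - (if y ∈ S then 1 else 0) := by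
  simp [netOut, sum_sub_distrib]

lemma netOut_toggle {u v : V} {d : Option (V × V)} (hd : d = none ∨ d = some (v, u)) :
    netOut (toggle u v d) = netOut d + netOut (some (u, v)) := by
  rcases hd with rfl | rfl <;> simp [toggle, netOut]

end NetOut

section Excess

variable {V E : Type} [Fintype E] {G : Multigraph V E} {f : E → Option (V × V)}

open Classical in
noncomputable def exitEdges (f : E → Option (V × V)) (S : Finset V) : Finset E :=
  {e | ∃ x y, f e = some (x, y) ∧ x ∈ S ∧ y ∉ S}

lemma mem_exitEdges {S : Finset V} {e : E} :
    e ∈ exitEdges f S ↔ ∃ x y, f e = some (x, y) ∧ x ∈ S ∧ y ∉ S := by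
  simp [exitEdges]

variable [DecidableEq V]

def excess (f : E → Option (V × V)) : V → ℤ := ∑ e, netOut (f e)

def IsFlow (G : Multigraph V E) (f : E → Option (V × V)) (s t : V) (m : ℕ) : Prop :=
  G.Orients f ∧ excess f = (m : ℤ) • netOut (some (s, t))

lemma isFlow_zero (s t : V) : G.IsFlow (fun _ => none) s t 0 :=
  ⟨fun _ _ _ h => (Option.some_ne_none _ h.symm).elim, by ext; simp [excess, netOut]⟩

lemma IsFlow.sum_excess {s t : V} {m : ℕ} (hf : G.IsFlow f s t m) (S : Finset V) :
    ∑ v ∈ S, excess f v = m * ((if s ∈ S then 1 else 0) - (if t ∈ S then 1 else 0)) := by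
  simp only [hf.2, Pi.smul_apply, smul_eq_mul, ← mul_sum, sum_netOut_some]

lemma sum_excess_eq_card_exitEdges (S : Finset V)
    (hS : ∀ e x y, f e = some (x, y) → y ∈ S → x ∈ S) :
    ∑ v ∈ S, excess f v = #(exitEdges f S) := by
  rw [exitEdges, natCast_card_filter]
  simp only [excess, Finset.sum_apply]
  rw [sum_comm]
  refine sum_congr rfl fun e _ => ?_
  rcases hfe : f e with _ | ⟨x, y⟩
  · simp [netOut]
  · have := hS e x y hfe
    rw [sum_netOut_some]
    by_cases hx : x ∈ S <;> by_cases hy : y ∈ S <;> simp_all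

/-- The vertices from which `t` is reached by walking against the flow contain `s`: otherwise
they would form a set with net outflow `-(m + 1)` that no flow enters. -/
lemma IsFlow.exists_cancelling_path [Fintype V] {s t : V} {m : ℕ}
    (hf : G.IsFlow f s t (m + 1)) :
    ∃ p : G.Walk t s, p.IsPath ∧ ∀ x e y, (x, e, y) ∈ p.steps → f e = some (y, x) := by
  classical
  let S : Finset V := {v | Relation.ReflTransGen (fun x y => ∃ e, f e = some (y, x)) t v}
  by_cases hs : s ∈ S
  · exact exists_isPath_of_reflTransGen (fun x e y h => (hf.1 e y x h).trans Sym2.eq_swap)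
      (by simpa [S] using hs)
  · have hsum := sum_excess_eq_card_exitEdges S fun e x y hxy hy => by
      simp only [S, mem_filter, mem_univ, true_and] at hy ⊢
      exact hy.tail ⟨e, hxy⟩
    rw [hf.sum_excess, if_neg hs, if_pos (by simp [S, Relation.ReflTransGen.refl])] at hsum
    omega

variable [DecidableEq E]

lemma excess_update (f : E → Option (V × V)) (e : E) (d : Option (V × V)) :
    excess (Function.update f e d) = excess f - netOut (f e) + netOut d := by
  simp only [excess]
  rw [← add_sum_erase _ _ (mem_univ e), ← add_sum_erase _ _ (mem_univ e),
    Function.update_self,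
    sum_congr rfl fun e' he' => by rw [Function.update_of_ne (ne_of_mem_erase he')]]
  abel

lemma excess_augment {u w : V} (p : G.Walk u w)
    (hp : ∀ x e y, (x, e, y) ∈ p.steps → G.ResidualStep f x e y) (hnd : p.edges.Nodup) :
    excess (augment f p) = excess f + netOut (some (u, w)) := by
  induction p with
  | nil => simp [augment, netOut]
  | @cons u v w e h p ih =>
    simp only [Walk.steps, List.mem_cons, Prod.mk.injEq] at hp
    simp only [Walk.edges, List.nodup_cons] at hnd
    have hstep : f e = none ∨ f e = some (v, u) :=
      (hp u e v (Or.inl ⟨rfl, rfl, rfl⟩)).imp_left And.left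
    rw [augment, excess_update, augment_of_not_mem p hnd.1, netOut_toggle hstep,
      ih (fun x e y hs => hp x e y (Or.inr hs)) hnd.2]
    ext x
    simp only [netOut, Pi.add_apply, Pi.sub_apply]
    abel

lemma isFlow_augment {s t : V} {m : ℕ} (hf : G.IsFlow f s t m) (p : G.Walk s t)
    (hp : p.IsPath) (hres : ∀ x e y, (x, e, y) ∈ p.steps → G.ResidualStep f x e y) :
    G.IsFlow (augment f p) s t (m + 1) := by
  refine ⟨orients_augment hf.1 p hres, ?_⟩
  rw [excess_augment p hres hp.edges_nodup, hf.2]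
  push_cast
  rw [add_smul, one_smul]

lemma IsFlow.exists_paths [Fintype V] {s t : V} {m : ℕ} (hf : G.IsFlow f s t m) :
    ∃ P : Fin m → G.Walk t s, (∀ i, (P i).IsPath ∧ ∀ e ∈ (P i).edges, f e ≠ none) ∧
      Pairwise fun i j => (P i).edges.Disjoint (P j).edges := by
  induction m generalizing f with
  | zero => exact ⟨Fin.elim0, fun i => i.elim0, fun i => i.elim0⟩
  | succ m ih =>
    obtain ⟨p, hp, hcancel⟩ := hf.exists_cancelling_path
    have hused : ∀ e ∈ p.edges, f e ≠ none := fun e he => by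
      obtain ⟨⟨x, e, y⟩, hs, rfl⟩ := List.mem_map.1 (p.edges_eq_map_steps ▸ he)
      simp [hcancel x e y hs]
    have hres : ∀ x e y, (x, e, y) ∈ p.steps → G.ResidualStep f x e y :=
      fun x e y hs => Or.inr (hcancel x e y hs)
    have hf' : G.IsFlow (augment f p) s t m := by
      refine ⟨orients_augment hf.1 p hres, ?_⟩
      rw [excess_augment p hres hp.edges_nodup, hf.2, netOut_some_swap]
      push_cast
      rw [add_smul, one_smul, neg_add_cancel_right]
    have hleft : ∀ e, augment f p e ≠ none → f e ≠ none ∧ e ∉ p.edges := fun e he => by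
      by_cases hep : e ∈ p.edges
      · exact absurd (augment_eq_none p hep (hused e hep)) he
      · exact ⟨by rwa [augment_of_not_mem p hep] at he, hep⟩
    obtain ⟨P, hP, hdisj⟩ := ih hf'
    refine ⟨Fin.cons p P, Fin.cases ⟨hp, hused⟩ fun i =>
      ⟨(hP i).1, fun e he => (hleft e ((hP i).2 e he)).1⟩, ?_⟩
    refine pairwise_fin_succ_iff.2 ⟨fun i e he he' => ?_, fun j e he he' => ?_, ?_⟩
    · exact (hleft e ((hP i).2 e (by simpa using he))).2 (by simpa using he')
    · exact (hleft e ((hP j).2 e (by simpa using he'))).2 (by simpa using he)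
    · simpa using hdisj

lemma IsFlow.edgeDisjointPaths [Fintype V] {s t : V} {m : ℕ} (hf : G.IsFlow f s t m) :
    G.EdgeDisjointPaths m t s := by
  obtain ⟨P, hP, hdisj⟩ := hf.exists_paths
  exact ⟨P, fun i => (hP i).1, fun i j hij e he he' => hdisj hij he he'⟩

/-- The separating edges are the flow edges leaving the set of vertices that the residual
graph reaches from `s`. -/
lemma IsFlow.augment_or_separates [Fintype V] {s t : V} {m : ℕ} (hf : G.IsFlow f s t m) :
    (∃ f', G.IsFlow f' s t (m + 1)) ∨ ∃ X : Finset E, #X = m ∧ G.Separates X t s := by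
  classical
  let R : Finset V := {v | Relation.ReflTransGen (fun x y => ∃ e, G.ResidualStep f x e y) s v}
  have hR : ∀ x e y, G.ResidualStep f x e y → y ∉ R → x ∉ R := fun x e y h hy hx => by
    simp only [R, mem_filter, mem_univ, true_and] at hx hy
    exact hy (hx.tail ⟨e, h⟩)
  have hs : s ∈ R := by simp [R, Relation.ReflTransGen.refl]
  by_cases ht : t ∈ R
  · obtain ⟨p, hp, hres⟩ := exists_isPath_of_reflTransGen
      (fun _ _ _ h => ResidualStep.ends hf.1 h) (by simpa [R] using ht)
    exact Or.inl ⟨_, isFlow_augment hf p hp hres⟩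
  refine Or.inr ⟨exitEdges f R, ?_,
    fun p => p.exists_mem_edges_of_crossing (R := (R : Set V)) ?_ ht hs⟩
  · have hsum := sum_excess_eq_card_exitEdges R fun e x y hxy =>
      not_imp_not.1 (hR y e x (Or.inr hxy))
    rw [hf.sum_excess, if_pos hs, if_neg ht] at hsum
    omega
  · intro e x y hends hx hy
    simp only [mem_coe] at hx hy
    rw [mem_exitEdges]
    rcases hfe : f e with _ | ⟨x', y'⟩
    · exact absurd hy (hR y e x (Or.inl ⟨hfe, hends.trans Sym2.eq_swap⟩) hx)
    · obtain ⟨rfl, rfl⟩ | ⟨rfl, rfl⟩ := Sym2.eq_iff.1 ((hf.1 e x' y' hfe).symm.trans hends)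
      · exact absurd hy (hR y' e x' (Or.inr hfe) hx)
      · exact ⟨_, _, rfl, hy, hx⟩

end Excess

section Menger

variable {V E : Type} [Fintype V] [Fintype E] {G : Multigraph V E}

/-- Flows are sent from `b` to `a`, so that cancelling them yields paths from `a` to `b`. -/
lemma exists_flow_or_separates [DecidableEq V] (a b : V) (m : ℕ) :
    (∃ f, G.IsFlow f b a m) ∨ ∃ X : Finset E, #X < m ∧ G.Separates X a b := by
  classical
  induction m with
  | zero => exact Or.inl ⟨_, isFlow_zero b a⟩
  | succ m ih =>
    rcases ih with ⟨f, hf⟩ | ⟨X, hX, hsep⟩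
    · rcases hf.augment_or_separates with hf' | ⟨X, hX, hsep⟩
      exacts [Or.inl hf', Or.inr ⟨X, by omega, hsep⟩]
    · exact Or.inr ⟨X, by omega, hsep⟩

theorem exists_separates_of_not_edgeDisjointPaths {k : ℕ} {a b : V}
    (h : ¬ G.EdgeDisjointPaths k a b) : ∃ X : Finset E, #X < k ∧ G.Separates X a b := by
  classical
  exact (exists_flow_or_separates a b k).resolve_left fun ⟨_, hf⟩ => h hf.edgeDisjointPaths

end Menger

end Multigraph

theorem simK_separate_two_classes_general
    {V E : Type} [Fintype V] [Fintype E] (G : Multigraph V E) (k : ℕ)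
    (A B : Set V) (hA : A.Nonempty) (hB : B.Nonempty)
    (hAcl : ∀ a ∈ A, ∀ a' ∈ A, G.SimK k a a')
    (hBcl : ∀ b ∈ B, ∀ b' ∈ B, G.SimK k b b')
    (hAB : ∀ a ∈ A, ∀ b ∈ B, ¬ G.SimK k a b) :
    ∃ X : Finset E, X.card ≤ k - 1 ∧
      ∀ a ∈ A, ∀ b ∈ B, ∀ p : G.Walk a b, ∃ e ∈ p.edges, e ∈ X := by
  obtain ⟨a, ha⟩ := hA
  obtain ⟨b, hb⟩ := hB
  obtain ⟨X, hXk, hX⟩ :=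
    Multigraph.exists_separates_of_not_edgeDisjointPaths fun h => hAB a ha b hb (Or.inr h)
  refine ⟨X, by omega, fun a' ha' b' hb' p => ?_⟩
  by_contra! hp
  obtain ⟨qa, hqa⟩ := (hAcl a ha a' ha').exists_walk_avoiding hXk
  obtain ⟨qb, hqb⟩ := (hBcl b' hb' b hb).exists_walk_avoiding hXk
  obtain ⟨e, he, heX⟩ := hX ((qa.append p).append qb)
  simp only [Multigraph.Walk.edges_append, List.mem_append] at he
  rcases he with (he | he) | he
  exacts [hqa e he heX, hp e he heX, hqb e he heX]

/-- if `A` and `B` are nonempty subsets of two distinct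
equivalence classes of `∼ₖ`, then some set `X` of at most `k − 1` edges
separates `A` from `B`: in `G − X` there is no path (indeed no walk) from a
vertex of `A` to a vertex of `B`. -/
theorem simK_separate_two_classes
    {V E : Type} [Fintype V] [Fintype E] (G : Multigraph V E) (k : ℕ)
    (hk : 1 ≤ k) (A B : Set V) (hA : A.Nonempty) (hB : B.Nonempty)
    (hAcl : ∀ a ∈ A, ∀ a' ∈ A, G.SimK k a a')
    (hBcl : ∀ b ∈ B, ∀ b' ∈ B, G.SimK k b b')
    (hAB : ∀ a ∈ A, ∀ b ∈ B, ¬ G.SimK k a b) :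
    ∃ X : Finset E, X.card ≤ k - 1 ∧
      ∀ a ∈ A, ∀ b ∈ B, ∀ p : G.Walk a b, ∃ e ∈ p.edges, e ∈ X :=
  simK_separate_two_classes_general G k A B hA hB hAcl hBcl hAB
end

section
/- For every ℓ ≥ 30, the sun graph S_ℓ does not contain two edge-disjoint cycles of length at least ℓ. -/
open SimpleGraph Finset

/-- The sun graph `S_ℓ` with clique size `p`: a complete graph on the
vertices `Sum.inl i` (`i : ZMod p`) together with degree-2 vertices
`Sum.inr i`, where `Sum.inr i` is adjacent exactly to `Sum.inl (i - 1)`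
and `Sum.inl i`. -/
def sunGraph (p : ℕ) : SimpleGraph (ZMod p ⊕ ZMod p) :=
  SimpleGraph.fromRel (fun a b =>
    match a, b with
    | Sum.inl _, Sum.inl _ => True
    | Sum.inr i, Sum.inl j => j = i - 1 ∨ j = i
    | _, _ => False)

/-!
A cycle of length `L` has `L` distinct vertices, at most `p` of them in the clique,
so it passes through at least `L - p` of the vertices `w_i`. A cycle through `w_i` must use both
edges at `w_i`, so edge-disjoint cycles pass through disjoint sets of `w_i`'s. Two edge-disjoint
cycles of length at least `ℓ` thus give `2 (ℓ - p) ≤ p`, i.e. `2ℓ ≤ 3p ≤ 2(ℓ - 1)`.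
-/

namespace SimpleGraph.Walk.IsCycle

variable {V : Type*} {G : SimpleGraph V} {u : V} {C : G.Walk u u}

theorem card_toFinset_support [DecidableEq V] (hC : C.IsCycle) :
    #C.support.toFinset = C.length := by
  rw [← C.cons_tail_support, List.toFinset_cons,
    insert_eq_of_mem (List.mem_toFinset.mpr (end_mem_tail_support hC.not_nil)),
    List.toFinset_card_of_nodup hC.support_nodup, List.length_tail, length_support,
    Nat.add_sub_cancel]

theorem mem_edges_of_neighborSet_subset (hC : C.IsCycle) {v a b : V} (hv : v ∈ C.support)
    (hN : G.neighborSet v ⊆ {a, b}) : s(v, a) ∈ C.edges := by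
  by_contra ha
  have hsub : C.toSubgraph.neighborSet v ⊆ {b} := by
    intro w hw
    have hGw : w ∈ G.neighborSet v := C.toSubgraph.adj_sub hw
    rcases hN hGw with rfl | hwb
    · exact absurd (adj_toSubgraph_iff_mem_edges.mp hw) ha
    · exact hwb
  have hcard_two := hC.ncard_neighborSet_toSubgraph_eq_two hv
  have hcard_le_one := Set.ncard_le_ncard hsub (Set.finite_singleton b)
  rw [Set.ncard_singleton] at hcard_le_one
  omega

end SimpleGraph.Walk.IsCycle

theorem SimpleGraph.Walk.IsCycle.length_le_card_add_card_toRight {α β : Type*} [Fintype α]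
    [DecidableEq α] [DecidableEq β] {G : SimpleGraph (α ⊕ β)} {u : α ⊕ β} {C : G.Walk u u} (hC : C.IsCycle) :
    C.length ≤ Fintype.card α + #C.support.toFinset.toRight := by
  rw [← hC.card_toFinset_support, ← card_toLeft_add_card_toRight]
  gcongr
  exact card_le_univ _

theorem sunGraph_neighborSet_inr_subset {p : ℕ} (i : ZMod p) :
    (sunGraph p).neighborSet (Sum.inr i) ⊆ {Sum.inl i, Sum.inl (i - 1)} := by
  intro z hz
  rcases z with j | j <;>
    simp only [mem_neighborSet, sunGraph, fromRel_adj] at hz <;> aesop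

theorem sunGraph_mem_edges_of_inr_mem_support {p : ℕ} {u : ZMod p ⊕ ZMod p}
    {C : (sunGraph p).Walk u u} (hC : C.IsCycle) {i : ZMod p} (hi : Sum.inr i ∈ C.support) :
    s(Sum.inr i, Sum.inl i) ∈ C.edges :=
  hC.mem_edges_of_neighborSet_subset hi (sunGraph_neighborSet_inr_subset i)

theorem sunGraph_length_add_length_le {p : ℕ} [NeZero p] {x y : ZMod p ⊕ ZMod p}
    {C₁ : (sunGraph p).Walk x x} {C₂ : (sunGraph p).Walk y y} (hC₁ : C₁.IsCycle)
    (hC₂ : C₂.IsCycle) (hdisj : ∀ e ∈ C₁.edges, e ∉ C₂.edges) :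
    C₁.length + C₂.length ≤ 3 * p := by
  set R₁ := C₁.support.toFinset.toRight
  set R₂ := C₂.support.toFinset.toRight
  have hR : Disjoint R₁ R₂ := by
    refine disjoint_left.mpr fun i hi₁ hi₂ => hdisj s(Sum.inr i, Sum.inl i) ?_ ?_
    · exact sunGraph_mem_edges_of_inr_mem_support hC₁ (by simpa [R₁] using hi₁)
    · exact sunGraph_mem_edges_of_inr_mem_support hC₂ (by simpa [R₂] using hi₂)
  have hR₁₂ : #R₁ + #R₂ ≤ p := by
    rw [← card_union_of_disjoint hR]
    simpa using card_le_univ (R₁ ∪ R₂)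
  have h₁ : C₁.length ≤ p + #R₁ := by
    simpa only [ZMod.card] using hC₁.length_le_card_add_card_toRight
  have h₂ : C₂.length ≤ p + #R₂ := by
    simpa only [ZMod.card] using hC₂.length_le_card_add_card_toRight
  omega

/-- for every `ℓ ≥ 30`, the sun graph `S_ℓ` (with clique
size `p = ⌊2(ℓ−1)/3⌋`) does not contain two edge-disjoint cycles of length
at least `ℓ`. -/
theorem sun_no_two_edge_disjoint_long_cycles (ℓ : ℕ) (hℓ : 30 ≤ ℓ) :
    ¬ ∃ (x y : ZMod (2 * (ℓ - 1) / 3) ⊕ ZMod (2 * (ℓ - 1) / 3))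
        (C₁ : (sunGraph (2 * (ℓ - 1) / 3)).Walk x x)
        (C₂ : (sunGraph (2 * (ℓ - 1) / 3)).Walk y y),
      C₁.IsCycle ∧ C₂.IsCycle ∧ ℓ ≤ C₁.length ∧ ℓ ≤ C₂.length ∧
      ∀ e ∈ C₁.edges, e ∉ C₂.edges := by
  have : NeZero (2 * (ℓ - 1) / 3) := ⟨by omega⟩
  rintro ⟨x, y, C₁, C₂, hC₁, hC₂, hL₁, hL₂, hdisj⟩
  have := sunGraph_length_add_length_le hC₁ hC₂ hdisj
  omega
end

section
/- For every ℓ ≥ 30 and every set X of at most ℓ/30 edges of the sun graph S_ℓ, the graph S_ℓ − X still contains a cycle of length at least ℓ. -/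
/-!
Number the Hamiltonian cycle `v₀ w₁ v₁ w₂ ⋯ v_{p-1} w₀` of `S_p` by the positions `0, …, 2p - 1`,
and keep a position unless a clique vertex at distance at most one from it is an endpoint of an
edge of `X`. Two consecutive kept positions are either adjacent on the Hamiltonian cycle, along an
edge with an untouched clique endpoint, or both clique vertices, joined by a chord that `X` cannot
contain; the same holds for the last and the first kept position. So the kept positions trace a
cycle of `S_p − X`. Each of the at most `2|X|` endpoints spoils at most three positions, so this
cycle has length at least `2p - 6|X| ≥ ℓ`.
-/

open SimpleGraph

open Finset

namespace SimpleGraph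

variable {V : Type*} {G : SimpleGraph V}

theorem deleteEdges_adj_of_notMem {s : Set (Sym2 V)} {U : Set V}
    (hU : ∀ e ∈ s, ∀ v ∈ e, v ∈ U) {u v : V} (h : G.Adj u v) (hu : u ∉ U ∨ v ∉ U) :
    (G.deleteEdges s).Adj u v := by
  refine deleteEdges_adj.2 ⟨h, fun he => ?_⟩
  rcases hu with hu | hv
  · exact hu (hU _ he u (Sym2.mem_mk_left u v))
  · exact hv (hU _ he v (Sym2.mem_mk_right u v))

theorem cycleGraph_isContained_of_finset {α : Type*} [LinearOrder α] {P : Finset α} {g : α → V}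
    (hg : Set.InjOn g P)
    (hnext : ∀ a ∈ P, ∀ b ∈ P, a < b → (∀ c ∈ P, c ≤ a ∨ b ≤ c) → G.Adj (g a) (g b))
    (hwrap : ∀ a ∈ P, ∀ b ∈ P, a < b → (∀ c ∈ P, a ≤ c ∧ c ≤ b) → G.Adj (g b) (g a)) :
    cycleGraph #P ⊑ G := by
  set e := P.orderEmbOfFin rfl
  have he : ∀ c ∈ P, ∃ j, e j = c := fun c hc => by
    rwa [← Set.mem_range, Finset.range_orderEmbOfFin]
  have key : ∀ i j : Fin #P, (j - i).val = 1 → G.Adj (g (e i)) (g (e j)) := by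
    intro i j hij
    by_cases hle : i ≤ j
    · rw [Fin.coe_sub_iff_le.2 hle] at hij
      refine hnext _ (P.orderEmbOfFin_mem rfl i) _ (P.orderEmbOfFin_mem rfl j)
        (e.strictMono (Fin.lt_def.2 (by omega))) fun c hc => ?_
      obtain ⟨k, rfl⟩ := he c hc
      rcases Nat.lt_or_ge i.val k.val with hk | hk
      · exact Or.inr (e.monotone (Fin.le_def.2 (by omega)))
      · exact Or.inl (e.monotone (Fin.le_def.2 hk))
    · rw [not_le] at hle
      rw [Fin.coe_sub_iff_lt.2 hle] at hij
      refine hwrap _ (P.orderEmbOfFin_mem rfl j) _ (P.orderEmbOfFin_mem rfl i)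
        (e.strictMono hle) fun c hc => ?_
      obtain ⟨k, rfl⟩ := he c hc
      exact ⟨e.monotone (Fin.le_def.2 (by omega)), e.monotone (Fin.le_def.2 (by omega))⟩
  refine ⟨Hom.toCopy ⟨g ∘ e, fun {i j} hij => ?_⟩ fun i j hij => e.injective ?_⟩
  · rcases cycleGraph_adj'.1 hij with h | h
    · exact (key j i h).symm
    · exact key i j h
  · exact hg (P.orderEmbOfFin_mem rfl i) (P.orderEmbOfFin_mem rfl j) hij

theorem card_biUnion_toFinset_le [DecidableEq V] (X : Finset (Sym2 V)) :
    #(X.biUnion Sym2.toFinset) ≤ 2 * #X := by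
  rw [mul_comm]
  refine card_biUnion_le_card_mul _ _ _ fun e _ => ?_
  rw [Sym2.card_toFinset]
  split_ifs <;> norm_num

end SimpleGraph

namespace sunGraph

variable {p : ℕ}

-- Position `2t` is `v_t` and position `2t + 1` is `w_{t+1}`; position `2p` is position `0` again.
def vertex (p n : ℕ) : ZMod p ⊕ ZMod p :=
  if n % 2 = 0 then .inl ((n / 2 : ℕ) : ZMod p) else .inr ((n / 2 : ℕ) + 1)

theorem adj_vertex_succ (n : ℕ) : (sunGraph p).Adj (vertex p n) (vertex p (n + 1)) := by
  rcases Nat.mod_two_eq_zero_or_one n with h | h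
  · have h' : (n + 1) / 2 = n / 2 := by omega
    simp [sunGraph, vertex, h, Nat.succ_mod_two_eq_one_iff.2 h, h']
  · have h' : (n + 1) / 2 = n / 2 + 1 := by omega
    simp [sunGraph, vertex, h, Nat.succ_mod_two_eq_zero_iff.2 h, h']

theorem adj_vertex_of_even {a b : ℕ} (ha : a % 2 = 0) (hb : b % 2 = 0)
    (hab : vertex p a ≠ vertex p b) : (sunGraph p).Adj (vertex p a) (vertex p b) := by
  simp only [vertex, ha, hb, if_true] at hab ⊢
  simp [sunGraph, hab]

theorem vertex_two_mul_self : vertex p (2 * p) = vertex p 0 := by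
  simp [vertex]

theorem vertex_injOn : Set.InjOn (vertex p) (range (2 * p)) := by
  intro a ha b hb hab
  simp only [coe_range, Set.mem_Iio] at ha hb
  have hval : ∀ {m : ℕ}, m < 2 * p → ((m / 2 : ℕ) : ZMod p).val = m / 2 :=
    fun hm => ZMod.val_natCast_of_lt (by omega)
  have key : ((a / 2 : ℕ) : ZMod p) = (b / 2 : ℕ) → a % 2 = b % 2 → a = b := fun h hmod => by
    have := congrArg ZMod.val h
    rw [hval ha, hval hb] at this
    omega
  unfold vertex at hab
  split_ifs at hab with h1 h2 h2
  · exact key (Sum.inl_injective hab) (by omega)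
  · exact key (add_right_cancel (Sum.inr_injective hab)) (by omega)

def keptPositions (p : ℕ) (U : Finset (ZMod p ⊕ ZMod p)) : Finset ℕ :=
  {n ∈ range (2 * p) | ∀ m ∈ Icc (n - 1) (n + 1), m % 2 = 0 → vertex p m ∉ U}

variable {U : Finset (ZMod p ⊕ ZMod p)} {X : Set (Sym2 (ZMod p ⊕ ZMod p))}

theorem mem_keptPositions {n : ℕ} : n ∈ keptPositions p U ↔
    n < 2 * p ∧ ∀ m, n ≤ m + 1 → m ≤ n + 1 → m % 2 = 0 → vertex p m ∉ U := by
  simp [keptPositions]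

theorem adj_vertex_succ_of_mem (hU : ∀ e ∈ X, ∀ v ∈ e, v ∈ U) {n : ℕ}
    (hn : n ∈ keptPositions p U) :
    ((sunGraph p).deleteEdges X).Adj (vertex p n) (vertex p (n + 1)) := by
  have hkept := (mem_keptPositions.1 hn).2
  refine deleteEdges_adj_of_notMem hU (adj_vertex_succ n) ?_
  rcases Nat.mod_two_eq_zero_or_one n with h | h
  · exact Or.inl (hkept n (by omega) (by omega) h)
  · exact Or.inr (hkept (n + 1) (by omega) (by omega) (by omega))

theorem mem_keptPositions_of_odd {n k : ℕ} (hn : n ∈ keptPositions p U) (hodd : n % 2 = 1)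
    (hk : k + 1 = n ∨ k = n + 1) (hk2p : k < 2 * p) : k ∈ keptPositions p U :=
  mem_keptPositions.2
    ⟨hk2p, fun m h₁ h₂ hm => (mem_keptPositions.1 hn).2 m (by omega) (by omega) hm⟩

theorem adj_vertex_of_consecutive (hU : ∀ e ∈ X, ∀ v ∈ e, v ∈ U) {a b : ℕ}
    (ha : a ∈ keptPositions p U) (hb : b ∈ keptPositions p U) (hab : a < b)
    (hgap : ∀ c ∈ keptPositions p U, c ≤ a ∨ b ≤ c) :
    ((sunGraph p).deleteEdges X).Adj (vertex p a) (vertex p b) := by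
  obtain ⟨ha2p, hka⟩ := mem_keptPositions.1 ha
  obtain ⟨hb2p, -⟩ := mem_keptPositions.1 hb
  by_cases hsucc : b = a + 1
  · exact hsucc ▸ adj_vertex_succ_of_mem hU ha
  have hae : a % 2 = 0 := by
    by_contra hodd
    have := hgap (a + 1) (mem_keptPositions_of_odd ha (by omega) (Or.inr rfl) (by omega))
    omega
  have hbe : b % 2 = 0 := by
    by_contra hodd
    have := hgap (b - 1) (mem_keptPositions_of_odd hb (by omega) (Or.inl (by omega)) (by omega))
    omega
  have hne : vertex p a ≠ vertex p b :=
    vertex_injOn.ne (by simpa using ha2p) (by simpa using hb2p) hab.ne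
  exact deleteEdges_adj_of_notMem hU (adj_vertex_of_even hae hbe hne)
    (Or.inl (hka a (by omega) (by omega) hae))

theorem adj_vertex_max_min (hU : ∀ e ∈ X, ∀ v ∈ e, v ∈ U) {a b : ℕ}
    (ha : a ∈ keptPositions p U) (hb : b ∈ keptPositions p U) (hab : a < b)
    (hext : ∀ c ∈ keptPositions p U, a ≤ c ∧ c ≤ b) :
    ((sunGraph p).deleteEdges X).Adj (vertex p b) (vertex p a) := by
  obtain ⟨ha2p, -⟩ := mem_keptPositions.1 ha
  obtain ⟨hb2p, hkb⟩ := mem_keptPositions.1 hb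
  have hae : a % 2 = 0 := by
    by_contra hodd
    have := hext (a - 1) (mem_keptPositions_of_odd ha (by omega) (Or.inl (by omega)) (by omega))
    omega
  by_cases hbe : b % 2 = 0
  · have hne : vertex p b ≠ vertex p a :=
      vertex_injOn.ne (by simpa using hb2p) (by simpa using ha2p) hab.ne'
    exact deleteEdges_adj_of_notMem hU (adj_vertex_of_even hbe hae hne)
      (Or.inl (hkb b (by omega) (by omega) hbe))
  -- `b` is the last position `2p - 1`, whose successor `2p` is position `0` again
  have hlast : b + 1 = 2 * p := by
    by_contra hne
    have := hext (b + 1) (mem_keptPositions_of_odd hb (by omega) (Or.inr rfl) (by omega))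
    omega
  have h0 : 0 ∈ keptPositions p U := by
    refine mem_keptPositions.2 ⟨by omega, fun m _ _ hm => ?_⟩
    obtain rfl : m = 0 := by omega
    rw [← vertex_two_mul_self]
    exact hkb _ (by omega) (by omega) (by omega)
  obtain rfl : a = 0 := by have := hext 0 h0; omega
  simpa [hlast, vertex_two_mul_self] using adj_vertex_succ_of_mem hU hb

theorem cycleGraph_isContained (hU : ∀ e ∈ X, ∀ v ∈ e, v ∈ U) :
    cycleGraph #(keptPositions p U) ⊑ (sunGraph p).deleteEdges X := by
  have hsub : (keptPositions p U : Set ℕ) ⊆ range (2 * p) := fun n hn => by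
    simpa using (mem_keptPositions.1 hn).1
  exact cycleGraph_isContained_of_finset (vertex_injOn.mono hsub)
    (fun a ha b hb => adj_vertex_of_consecutive hU ha hb)
    (fun a ha b hb => adj_vertex_max_min hU ha hb)

-- Each even position `m` whose clique vertex lies in `U` spoils at most the three positions
-- `m - 1, m, m + 1`, read cyclically modulo `2p`.
theorem two_mul_le_card_keptPositions_add : 2 * p ≤ #(keptPositions p U) + 3 * #U := by
  set E := {m ∈ range (2 * p) | m % 2 = 0 ∧ vertex p m ∈ U}
  have hE : #E ≤ #U := by
    refine card_le_card_of_injOn (vertex p) (fun m hm => (mem_filter.1 hm).2.2) ?_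
    exact vertex_injOn.mono fun m hm => (mem_filter.1 hm).1
  have hbad : range (2 * p) \ keptPositions p U ⊆
      E.biUnion fun m => {m, m + 1, (m + 2 * p - 1) % (2 * p)} := by
    intro n hn
    obtain ⟨hn2p, hnk⟩ := mem_sdiff.1 hn
    rw [mem_range] at hn2p
    simp only [mem_keptPositions, hn2p, true_and, not_forall, not_not] at hnk
    obtain ⟨m, h₁, h₂, hm, hmU⟩ := hnk
    simp only [mem_biUnion, mem_insert, mem_singleton]
    rcases Nat.lt_or_ge m (2 * p) with hm2p | hm2p
    · refine ⟨m, by simp [E, hm2p, hm, hmU], ?_⟩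
      rcases Nat.lt_or_ge n m with hnm | hnm
      · refine Or.inr (Or.inr ?_)
        rw [show m + 2 * p - 1 = n + 2 * p by omega, Nat.add_mod_right, Nat.mod_eq_of_lt hn2p]
      · omega
    · rw [show m = 2 * p by omega, vertex_two_mul_self] at hmU
      refine ⟨0, mem_filter.2 ⟨mem_range.2 (by omega), Nat.zero_mod 2, hmU⟩, Or.inr (Or.inr ?_)⟩
      rw [Nat.mod_eq_of_lt (by omega)]
      omega
  have hcard := (card_le_card hbad).trans
    (card_biUnion_le_card_mul _ _ 3 fun m _ => card_le_three)
  have hsplit := card_sdiff_add_card_eq_card (s := keptPositions p U) (t := range (2 * p))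
    fun n hn => mem_range.2 (mem_keptPositions.1 hn).1
  rw [card_range] at hsplit
  omega

theorem exists_isCycle_deleteEdges (X : Finset (Sym2 (ZMod p ⊕ ZMod p)))
    (h : 3 + 6 * #X ≤ 2 * p) :
    ∃ (x : ZMod p ⊕ ZMod p) (C : ((sunGraph p).deleteEdges ↑X).Walk x x),
      C.IsCycle ∧ 2 * p ≤ C.length + 6 * #X := by
  set U := X.biUnion Sym2.toFinset
  have hU : ∀ e ∈ (X : Set _), ∀ v ∈ e, v ∈ U := fun e he v hv =>
    mem_biUnion.2 ⟨e, he, Sym2.mem_toFinset.2 hv⟩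
  have hcard := two_mul_le_card_keptPositions_add (U := U)
  have hU2 : #U ≤ 2 * #X := card_biUnion_toFinset_le X
  obtain ⟨x, C, hC, hlen⟩ := (cycleGraph_isContained_iff (by omega)).1 (cycleGraph_isContained hU)
  exact ⟨x, C, hC, by omega⟩

end sunGraph

/-- for every `ℓ ≥ 30` and every set `X` of at most `ℓ/30`
edges of the sun graph `S_ℓ`, the graph `S_ℓ − X` still contains a cycle of
length at least `ℓ`. -/
theorem sun_no_small_hitting_set (ℓ : ℕ) (hℓ : 30 ≤ ℓ)
    (X : Finset (Sym2 (ZMod (2 * (ℓ - 1) / 3) ⊕ ZMod (2 * (ℓ - 1) / 3))))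
    (hX : (X.card : ℝ) ≤ (ℓ : ℝ) / 30) :
    ∃ (x : ZMod (2 * (ℓ - 1) / 3) ⊕ ZMod (2 * (ℓ - 1) / 3))
      (C : ((sunGraph (2 * (ℓ - 1) / 3)).deleteEdges ↑X).Walk x x),
      C.IsCycle ∧ ℓ ≤ C.length := by
  have hX' : 30 * #X ≤ ℓ := by exact_mod_cast (by linarith : (30 : ℝ) * #X ≤ ℓ)
  obtain ⟨x, C, hC, hlen⟩ := sunGraph.exists_isCycle_deleteEdges X (by omega)
  exact ⟨x, C, hC, by omega⟩
end

section
/- Let G be a connected graph and F ⊆ G a frame with ds(F) maximal. Then every F-path in G has length less than ℓ. -/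
open SimpleGraph

/-- A frame of `G`: a subgraph with minimum degree at least `2` in which
every cycle is long, i.e. has length at least `ℓ`. -/
def IsFrame (ℓ : ℕ) {V : Type} {G : SimpleGraph V} (F : G.Subgraph) : Prop :=
  (∀ v ∈ F.verts, 2 ≤ (F.neighborSet v).ncard) ∧
  (∀ (x : V) (C : G.Walk x x), C.IsCycle →
    (∀ e ∈ C.edges, e ∈ F.edgeSet) → ℓ ≤ C.length)

open scoped Classical in
/-- `ds F`: the sum of the degrees of the vertices of degree at least `3`
in `F`. -/
noncomputable def dsF {V : Type} [Fintype V] {G : SimpleGraph V}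
    (F : G.Subgraph) : ℕ :=
  ∑ v ∈ Finset.univ.filter (fun v => 3 ≤ (F.neighborSet v).ncard),
    (F.neighborSet v).ncard

/-!
Adding a long `F`-path `W` to `F` gives another frame: the inner vertices of `W` get degree `2`,
and a cycle of `F ∪ W` through an edge of `W` must use both edges of `W` at each inner vertex it
meets, so it runs through all of `W` and has length at least `|W| ≥ ℓ`. The endpoint `x` of `W`
already has degree at least `2` in `F` and gains a neighbour, so `ds` strictly increases,
contradicting the maximality of `F`.
-/

section

variable {V : Type} {G : SimpleGraph V}

namespace SimpleGraph.Walk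

theorem IsPath.edges_subset_edges_of_isCycle {u v z : V} {p : G.Walk u v} (hp : p.IsPath)
    {C : G.Walk z z} (hC : C.IsCycle)
    (hnbr : ∀ i, 0 < i → i < p.length →
      C.toSubgraph.neighborSet (p.getVert i) ⊆ p.toSubgraph.neighborSet (p.getVert i))
    {e : Sym2 V} (hep : e ∈ p.edges) (heC : e ∈ C.edges) : p.edges ⊆ C.edges := by
  let P (i : ℕ) : Prop := C.toSubgraph.Adj (p.getVert i) (p.getVert (i + 1))
  -- A cycle has exactly two neighbours at each of its vertices, so at an interior vertex of `p`
  -- that it meets it must use both edges of `p`.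
  have step : ∀ i, i + 1 < p.length → (P i ↔ P (i + 1)) := by
    intro i hi
    by_cases hw : p.getVert (i + 1) ∈ C.support
    · have hnbr_eq := Set.eq_of_subset_of_ncard_le (hnbr (i + 1) (by omega) hi)
        (by rw [hC.ncard_neighborSet_toSubgraph_eq_two hw,
          hp.ncard_neighborSet_toSubgraph_internal_eq_two (by omega) hi])
        p.finite_neighborSet_toSubgraph
      rw [hp.neighborSet_toSubgraph_internal (by omega) hi] at hnbr_eq
      have hprev : C.toSubgraph.Adj (p.getVert (i + 1)) (p.getVert i) := by
        simp [← Subgraph.mem_neighborSet, hnbr_eq]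
      have hnext : C.toSubgraph.Adj (p.getVert (i + 1)) (p.getVert (i + 1 + 1)) := by
        simp [← Subgraph.mem_neighborSet, hnbr_eq]
      exact iff_of_true hprev.symm hnext
    · exact iff_of_false (fun h ↦ hw (mem_support_of_adj_toSubgraph h.symm))
        (fun h ↦ hw (mem_support_of_adj_toSubgraph h))
  have hP : ∀ i, i < p.length → (P i ↔ P 0) := by
    intro i hi
    induction i with
    | zero => rfl
    | succ i ih => exact (step i hi).symm.trans (ih (by omega))
  have hmem : ∀ {e}, e ∈ p.edges → ∃ i < p.length, e = s(p.getVert i, p.getVert (i + 1)) := by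
    intro e he
    induction e with
    | _ a b => exact ((mk_mem_edges_iff_exists p).mp he).imp fun _ ⟨hi, h⟩ ↦ ⟨hi, h.symm⟩
  obtain ⟨i, hi, rfl⟩ := hmem hep
  intro e' he'
  obtain ⟨j, hj, rfl⟩ := hmem he'
  rw [← adj_toSubgraph_iff_mem_edges] at heC ⊢
  exact (hP j hj).mpr ((hP i hi).mp heC)

structure IsFPath {x y : V} (F : G.Subgraph) (W : G.Walk x y) : Prop where
  ne : x ≠ y
  isPath : W.IsPath
  start_mem : x ∈ F.verts
  end_mem : y ∈ F.verts
  internal_notMem : ∀ z ∈ W.support, z ≠ x → z ≠ y → z ∉ F.verts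
  edges_notMem : ∀ e ∈ W.edges, e ∉ F.edgeSet

namespace IsFPath

variable {F : G.Subgraph} {x y : V} {W : G.Walk x y}

theorem getVert_notMem (hW : W.IsFPath F) {i : ℕ} (h0 : 0 < i) (hi : i < W.length) :
    W.getVert i ∉ F.verts := by
  have hinj := hW.isPath.getVert_injOn
  refine hW.internal_notMem _ (W.getVert_mem_support i) (fun h ↦ ?_) (fun h ↦ ?_)
  · have := hinj (by simp; omega) (by simp) (h.trans W.getVert_zero.symm)
    omega
  · have := hinj (by simp; omega) (by simp) (h.trans W.getVert_length.symm)
    omega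

theorem neighborSet_sup_getVert (hW : W.IsFPath F) {i : ℕ} (h0 : 0 < i) (hi : i < W.length) :
    (F ⊔ W.toSubgraph).neighborSet (W.getVert i) = W.toSubgraph.neighborSet (W.getVert i) := by
  have hF : F.neighborSet (W.getVert i) = ∅ :=
    Set.eq_empty_of_forall_notMem fun _ h ↦ hW.getVert_notMem h0 hi h.fst_mem
  rw [Subgraph.neighborSet_sup, hF, Set.empty_union]

theorem ncard_neighborSet_start_lt [Finite V] (hW : W.IsFPath F) :
    (F.neighborSet x).ncard < ((F ⊔ W.toSubgraph).neighborSet x).ncard := by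
  have hnil : ¬W.Nil := fun h ↦ hW.ne h.eq
  have hsnd : W.snd ∉ F.neighborSet x := fun h ↦
    hW.edges_notMem _ (adj_toSubgraph_iff_mem_edges.mp (W.toSubgraph_adj_snd hnil)) h
  rw [Subgraph.neighborSet_sup, hW.isPath.neighborSet_toSubgraph_startpoint hnil,
    Set.union_singleton]
  exact Set.ncard_lt_ncard (Set.ssubset_insert hsnd)

theorem exists_getVert_eq_of_mem_sup (hW : W.IsFPath F) {v : V}
    (hv : v ∈ (F ⊔ W.toSubgraph).verts) (hvF : v ∉ F.verts) :
    ∃ i, 0 < i ∧ i < W.length ∧ W.getVert i = v := by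
  rcases hv with hv | hv
  · exact absurd hv hvF
  obtain ⟨i, rfl, hi⟩ := mem_support_iff_exists_getVert.mp (mem_verts_toSubgraph W |>.mp hv)
  refine ⟨i, Nat.pos_of_ne_zero fun h ↦ ?_, lt_of_le_of_ne hi fun h ↦ ?_, rfl⟩
  · exact hvF (by simpa [h] using hW.start_mem)
  · exact hvF (by simpa [h] using hW.end_mem)

end IsFPath

end SimpleGraph.Walk

open Walk

theorem IsFrame.sup_toSubgraph [Finite V] {ℓ : ℕ} {F : G.Subgraph} (hF : IsFrame ℓ F)
    {x y : V} {W : G.Walk x y} (hW : W.IsFPath F) (hlong : ℓ ≤ W.length) :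
    IsFrame ℓ (F ⊔ W.toSubgraph) := by
  refine ⟨fun v hv ↦ ?_, fun z C hC hCF' ↦ ?_⟩
  · by_cases hvF : v ∈ F.verts
    · exact (hF.1 v hvF).trans (Set.ncard_le_ncard Set.subset_union_left)
    obtain ⟨i, h0, hi, rfl⟩ := hW.exists_getVert_eq_of_mem_sup hv hvF
    rw [hW.neighborSet_sup_getVert h0 hi,
      hW.isPath.ncard_neighborSet_toSubgraph_internal_eq_two h0.ne' hi]
  by_cases hCF : ∀ e ∈ C.edges, e ∈ F.edgeSet
  · exact hF.2 z C hC hCF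
  push Not at hCF
  obtain ⟨e, heC, heF⟩ := hCF
  have heW : e ∈ W.edges := by
    rcases Subgraph.edgeSet_sup ▸ hCF' e heC with he | he
    · exact absurd he heF
    · exact W.mem_edges_toSubgraph.mp he
  have hsub := hW.isPath.edges_subset_edges_of_isCycle hC (fun i h0 hi a ha ↦ by
    rw [← hW.neighborSet_sup_getVert h0 hi]
    exact hCF' _ (adj_toSubgraph_iff_mem_edges.mp ha)) heW heC
  calc ℓ ≤ W.length := hlong
    _ = W.edges.length := W.length_edges.symm
    _ ≤ C.edges.length := (List.subperm_of_subset hW.isPath.isTrail.edges_nodup hsub).length_le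
    _ = C.length := C.length_edges

open scoped Classical in
theorem dsF_lt_of_le [Fintype V] {F F' : G.Subgraph} (hle : F ≤ F') {x : V}
    (hx : 2 ≤ (F.neighborSet x).ncard)
    (hlt : (F.neighborSet x).ncard < (F'.neighborSet x).ncard) : dsF F < dsF F' := by
  have hmono : ∀ v, (F.neighborSet v).ncard ≤ (F'.neighborSet v).ncard := fun v ↦
    Set.ncard_le_ncard (Subgraph.neighborSet_subset_of_subgraph hle v)
  simp only [dsF, Finset.sum_filter]
  refine Finset.sum_lt_sum (fun v _ ↦ ?_) ⟨x, Finset.mem_univ x, ?_⟩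
  · split_ifs <;> grind
  · split_ifs <;> omega

end

theorem frame_paths_short_general {V : Type} [Fintype V] (G : SimpleGraph V)
    (ℓ : ℕ)
    (F : G.Subgraph) (hF : IsFrame ℓ F)
    (hmax : ∀ F' : G.Subgraph, IsFrame ℓ F' → dsF F' ≤ dsF F) :
    ∀ {x y : V} (W : G.Walk x y), x ≠ y → W.IsPath →
      x ∈ F.verts → y ∈ F.verts →
      (∀ z ∈ W.support, z ≠ x → z ≠ y → z ∉ F.verts) →
      (∀ e ∈ W.edges, e ∉ F.edgeSet) →
      W.length < ℓ := by
  intro x y W hxy hp hx hy hint hed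
  have hW : W.IsFPath F := ⟨hxy, hp, hx, hy, hint, hed⟩
  by_contra! hlong
  exact (hmax _ (hF.sup_toSubgraph hW hlong)).not_gt
    (dsF_lt_of_le le_sup_left (hF.1 x hx) hW.ncard_neighborSet_start_lt)

/-- if `G` is connected and `F` is a frame of `G`
maximizing `ds(F)`, then every `F`-path in `G` (a path with two distinct
endvertices in `F`, internally disjoint from `F` and using no edge of `F`)
has length less than `ℓ`. -/
theorem frame_paths_short {V : Type} [Fintype V] (G : SimpleGraph V)
    (ℓ : ℕ) (hℓ : 3 ≤ ℓ) (hG : G.Connected)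
    (F : G.Subgraph) (hF : IsFrame ℓ F)
    (hmax : ∀ F' : G.Subgraph, IsFrame ℓ F' → dsF F' ≤ dsF F) :
    ∀ {x y : V} (W : G.Walk x y), x ≠ y → W.IsPath →
      x ∈ F.verts → y ∈ F.verts →
      (∀ z ∈ W.support, z ≠ x → z ≠ y → z ∉ F.verts) →
      (∀ e ∈ W.edges, e ∉ F.edgeSet) →
      W.length < ℓ :=
  frame_paths_short_general G ℓ F hF hmax
end
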